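/- Under pure LoS channels, i.e., when each c_i has unit modulus (c_i = exp(i θ_i)), the sign-alignment SNR satisfies γ(φ^SA) ≥ N²/4. -/

import Mathlib

open Finset

/-- The sign of a real number, returning `+1` when the argument is `0`. -/
noncomputable def sgn (t : ℝ) : ℝ := if 0 ≤ t then 1 else -1

/-- The SNR objective `γ(φ) = |c^T φ|²`. -/
noncomputable def gam {N : ℕ} (c : Fin N → ℂ) (φ : Fin N → ℝ) : ℝ :=
  ‖∑ i, c i * (φ i : ℂ)‖ ^ 2

/-- The sign-alignment configuration: the better of `sign(Re c)` and `sign(Im c)`. -/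
noncomputable def phiSA {N : ℕ} (c : Fin N → ℂ) : Fin N → ℝ :=
  if gam c (fun i => sgn (c i).re) ≥ gam c (fun i => sgn (c i).im)
  then (fun i => sgn (c i).re) else (fun i => sgn (c i).im)

/-!
Aligning the signs with `Re c` makes the real part of `∑ cᵢ φᵢ` equal to `A = ∑ |Re cᵢ|`, so
`γ ≥ A²`; likewise `γ ≥ B²` with `B = ∑ |Im cᵢ|` for the imaginary alignment. Unit modulus gives
`1 ≤ |Re cᵢ| + |Im cᵢ|`, hence `A + B ≥ N`, and the better of the two is at least
`max (A², B²) ≥ ((A + B) / 2)² ≥ N² / 4`.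
-/

lemma mul_sgn_self (t : ℝ) : t * sgn t = |t| := by
  unfold sgn
  split_ifs with ht
  · rw [abs_of_nonneg ht, mul_one]
  · rw [abs_of_neg (not_le.mp ht), mul_neg_one]

section

variable {N : ℕ} (c : Fin N → ℂ)

lemma sq_sum_re_mul_le_gam (φ : Fin N → ℝ) : (∑ i, (c i).re * φ i) ^ 2 ≤ gam c φ := by
  have hre : (∑ i, c i * (φ i : ℂ)).re = ∑ i, (c i).re * φ i := by
    simp only [Complex.re_sum, Complex.re_mul_ofReal]
  rw [gam, ← hre, ← sq_abs]
  exact pow_le_pow_left₀ (abs_nonneg _) (Complex.abs_re_le_norm _) 2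

lemma sq_sum_im_mul_le_gam (φ : Fin N → ℝ) : (∑ i, (c i).im * φ i) ^ 2 ≤ gam c φ := by
  have him : (∑ i, c i * (φ i : ℂ)).im = ∑ i, (c i).im * φ i := by
    simp only [Complex.im_sum, Complex.im_mul_ofReal]
  rw [gam, ← him, ← sq_abs]
  exact pow_le_pow_left₀ (abs_nonneg _) (Complex.abs_im_le_norm _) 2

lemma sq_sum_abs_re_le_gam_sgn_re :
    (∑ i, |(c i).re|) ^ 2 ≤ gam c (fun i => sgn (c i).re) := by
  simpa only [mul_sgn_self] using sq_sum_re_mul_le_gam c (fun i => sgn (c i).re)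

lemma sq_sum_abs_im_le_gam_sgn_im :
    (∑ i, |(c i).im|) ^ 2 ≤ gam c (fun i => sgn (c i).im) := by
  simpa only [mul_sgn_self] using sq_sum_im_mul_le_gam c (fun i => sgn (c i).im)

lemma gam_phiSA :
    gam c (phiSA c) = max (gam c (fun i => sgn (c i).re)) (gam c (fun i => sgn (c i).im)) := by
  unfold phiSA
  split_ifs with h
  · exact (max_eq_left h).symm
  · exact (max_eq_right (not_le.mp h).le).symm

lemma card_le_sum_abs_re_add_sum_abs_im (hunit : ∀ i, ‖c i‖ = 1) :
    (N : ℝ) ≤ ∑ i, |(c i).re| + ∑ i, |(c i).im| := by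
  rw [← sum_add_distrib]
  calc (N : ℝ) = ∑ i, ‖c i‖ := by simp [hunit]
    _ ≤ ∑ i, (|(c i).re| + |(c i).im|) :=
      sum_le_sum fun i _ => Complex.norm_le_abs_re_add_abs_im (c i)

end

lemma sq_add_div_four_le_max_sq {a b : ℝ} (ha : 0 ≤ a) (hb : 0 ≤ b) :
    (a + b) ^ 2 / 4 ≤ max (a ^ 2) (b ^ 2) := by
  rcases le_total a b with hab | hba
  · nlinarith [le_max_right (a ^ 2) (b ^ 2)]
  · nlinarith [le_max_left (a ^ 2) (b ^ 2)]

theorem stmt12 {N : ℕ} (c : Fin N → ℂ) (hunit : ∀ i, ‖c i‖ = 1) :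
    gam c (phiSA c) ≥ (N : ℝ) ^ 2 / 4 := by
  set A := ∑ i, |(c i).re|
  set B := ∑ i, |(c i).im|
  have hA : 0 ≤ A := sum_nonneg fun i _ => abs_nonneg _
  have hB : 0 ≤ B := sum_nonneg fun i _ => abs_nonneg _
  calc (N : ℝ) ^ 2 / 4 ≤ (A + B) ^ 2 / 4 := by
        gcongr
        exact card_le_sum_abs_re_add_sum_abs_im c hunit
    _ ≤ max (A ^ 2) (B ^ 2) := sq_add_div_four_le_max_sq hA hB
    _ ≤ gam c (phiSA c) := by
        rw [gam_phiSA]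
        exact max_le_max (sq_sum_abs_re_le_gam_sgn_re c) (sq_sum_abs_im_le_gam_sgn_im c)
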